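/- arXiv:2404.07380 — 6 statements merged into one kernel-verified Lean document; each statement's English description precedes it below -/
import Mathlib

section
/- Let G be a finite abelian group, A ⊆ G × G nonempty, A_x = {y ∈ G : (x,y) ∈ A}, f = Σ_{x∈G} 1_{A_x} ∘ 1_{A_x + x}, D : G → ℝ_{≥0} given by D(x) = |A_x|, and η ∈ ℝ_{≥0}. If ⟨μ_f, μ_D⟩ ≥ η, then the number of skew corners in A (the number of quadruples (x,y,y',h) ∈ G⁴ with (x,y), (x,y+h), (x+h,y') all in A) is at least η · |A|³ / |G|². -/
open scoped BigOperators Classical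

noncomputable section

namespace SkewPaper

variable {G : Type*}

/-- Expectation (average) of `f` over a finite type: `E[f] = (1/|G|) ∑ x, f x`. -/
def expect [Fintype G] (f : G → ℝ) : ℝ := (∑ x, f x) / (Fintype.card G)

/-- Normalized inner product `⟨f, g⟩ = E_{x∈G} f(x) g(x)`. -/
def inprod [Fintype G] (f g : G → ℝ) : ℝ := expect (fun x => f x * g x)

/-- Convolution `(f ∗ g)(x) = E_{y∈G} f(y) g(x − y)`. -/
def conv [Fintype G] [AddCommGroup G] (f g : G → ℝ) : G → ℝ :=
  fun x => expect (fun y => f y * g (x - y))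

/-- Difference convolution `(f ∘ g)(x) = E_{y∈G} f(y) g(x + y)`. -/
def dconv [Fintype G] [AddCommGroup G] (f g : G → ℝ) : G → ℝ :=
  fun x => expect (fun y => f y * g (x + y))

/-- Indicator function `1_A` of a set `A`. -/
def ind (A : Set G) : G → ℝ := Set.indicator A (fun _ => (1 : ℝ))

/-- Normalized indicator `μ_A = (|G|/|A|) · 1_A`. -/
def muSet [Fintype G] (A : Set G) : G → ℝ :=
  fun x => ((Fintype.card G : ℝ) / (Nat.card A : ℝ)) * ind A x

/-- `μ_f = f / E[f]`, the normalization of `f` to have mean 1. -/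
def muFun [Fintype G] (f : G → ℝ) : G → ℝ := fun x => f x / expect f

/-- Weighted `L^p` norm `‖f‖_{p(ν)} = (E_x ν(x) |f(x)|^p)^{1/p}`. -/
def wnorm [Fintype G] (p : ℕ) (ν f : G → ℝ) : ℝ :=
  (expect (fun x => ν x * |f x| ^ p)) ^ ((p : ℝ)⁻¹)

/-- `L^p` norm with respect to the uniform measure. -/
def pnorm [Fintype G] (p : ℕ) (f : G → ℝ) : ℝ := wnorm p (fun _ => 1) f

/-- Sup norm `‖f‖_∞`. -/
def supNorm (f : G → ℝ) : ℝ := ⨆ x, |f x|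

/-- `A` is skew-corner-free: it contains no nontrivial skew corner
`(x,y), (x,y+h), (x+h,y')` with `h ≠ 0`. -/
def IsSkewCornerFree [AddCommGroup G] (A : Set (G × G)) : Prop :=
  ∀ x y y' h : G, (x, y) ∈ A → (x, y + h) ∈ A → (x + h, y') ∈ A → h = 0

/-- The set of quadruples `(x, y, y', h)` forming a skew corner of `A`. -/
def skewCorners [AddCommGroup G] (A : Set (G × G)) : Set (G × G × G × G) :=
  {q | (q.1, q.2.1) ∈ A ∧ (q.1, q.2.1 + q.2.2.2) ∈ A ∧ (q.1 + q.2.2.2, q.2.2.1) ∈ A}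

/-- The column `A_x = {y : (x,y) ∈ A}`. -/
def col (A : Set (G × G)) (x : G) : Set G := {y | (x, y) ∈ A}

/-- A Bohr set datum: a finite frequency set of characters together with a width. -/
structure BohrSet (G : Type*) [AddCommGroup G] where
  freq : Finset (AddChar G ℂ)
  width : ℝ

namespace BohrSet

variable [AddCommGroup G]

/-- The underlying set `Bohr(Γ, φ) = {x : |1 − γ(x)| ≤ φ for all γ ∈ Γ}`. -/
def toSet (B : BohrSet G) : Set G :=
  {x | ∀ γ ∈ B.freq, ‖(1 : ℂ) - γ x‖ ≤ B.width}

/-- The rank `|Γ|` of a Bohr set. -/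
def rank (B : BohrSet G) : ℕ := B.freq.card

/-- The dilate `B_ρ = Bohr(Γ, ρφ)`. -/
def dilate (B : BohrSet G) (ρ : ℝ) : BohrSet G := ⟨B.freq, ρ * B.width⟩

/-- `B'` is a sub-Bohr set of `B` (written `B' ≤ B`): its frequency set contains
that of `B` and its width is at most that of `B`. -/
def Sub (B' B : BohrSet G) : Prop := B.freq ⊆ B'.freq ∧ B'.width ≤ B.width

/-- A Bohr set of rank `r` is regular if for all `0 ≤ κ ≤ 1/(100r)`,
`|B_{1+κ}| ≤ (1+100κr)|B|` and `|B_{1−κ}| ≥ (1−100κr)|B|`. -/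
def IsRegular (B : BohrSet G) : Prop :=
  ∀ κ : ℝ, 0 ≤ κ → κ ≤ 1 / (100 * B.rank) →
    ((Nat.card (B.dilate (1 + κ)).toSet : ℝ) ≤ (1 + 100 * κ * B.rank) * (Nat.card B.toSet : ℝ) ∧
     (Nat.card (B.dilate (1 - κ)).toSet : ℝ) ≥ (1 - 100 * κ * B.rank) * (Nat.card B.toSet : ℝ))

/-- The density `μ(B) = |B|/|G|`. -/
def measure [Fintype G] (B : BohrSet G) : ℝ := (Nat.card B.toSet : ℝ) / (Fintype.card G : ℝ)

/-- The normalized indicator measure `μ_B`. -/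
def mu [Fintype G] (B : BohrSet G) : G → ℝ := muSet B.toSet

end BohrSet


/-- (r, λ)-simultaneously spread collection of subsets of 𝔽_q^n. -/
def SimSpread {F : Type*} [Field F] [Fintype F] {n : ℕ} {ι : Type*} [Fintype ι]
    (A : ι → Set (Fin n → F)) (r : ℕ) (lam : ℝ) : Prop :=
  ∀ V : Submodule F (Fin n → F), n ≤ Module.finrank F V + r →
    ∀ x : ι → Fin n → F,
      ∑ i, ((Nat.card ↥(((fun a => a - x i) '' A i) ∩ (V : Set (Fin n → F))) : ℝ) /
            (Nat.card (V : Set (Fin n → F)) : ℝ)) ^ 2 ≤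
        lam * ∑ i, ((Nat.card (A i) : ℝ) / ((Fintype.card F : ℝ) ^ n)) ^ 2

/-- (r, λ)-simultaneously spread in an ambient subspace `W`. -/
def SimSpreadIn {F : Type*} [Field F] [Fintype F] {n : ℕ} {ι : Type*} [Fintype ι]
    (W : Submodule F (Fin n → F)) (A : ι → Set (Fin n → F)) (r : ℕ) (lam : ℝ) : Prop :=
  ∀ V : Submodule F (Fin n → F), V ≤ W → Module.finrank F W ≤ Module.finrank F V + r →
    ∀ x : ι → Fin n → F, (∀ i, x i ∈ W) →
      ∑ i, ((Nat.card ↥(((fun a => a - x i) '' A i) ∩ (V : Set (Fin n → F))) : ℝ) /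
            (Nat.card (V : Set (Fin n → F)) : ℝ)) ^ 2 ≤
        lam * ∑ i, ((Nat.card (A i) : ℝ) / (Nat.card (W : Set (Fin n → F)) : ℝ)) ^ 2

/-- (r, δ, λ)-simultaneously spread collection of subsets of a regular Bohr set `B`. -/
def SimSpreadBohr {G : Type*} [AddCommGroup G] [Fintype G] {ι : Type*} [Fintype ι]
    (B : BohrSet G) (A : ι → Set G) (r : ℕ) (δ lam : ℝ) : Prop :=
  ∀ B' : BohrSet G, B'.Sub B → B'.IsRegular → B'.rank ≤ B.rank + r →
    δ * B.measure ≤ B'.measure →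
    ∀ x : ι → G,
      ∑ i, ((Nat.card ↥(((fun a => a - x i) '' A i) ∩ B'.toSet) : ℝ) /
            (Nat.card B'.toSet : ℝ)) ^ 2 ≤
        lam * ∑ i, ((Nat.card (A i) : ℝ) / (Nat.card B.toSet : ℝ)) ^ 2


lemma ind_apply' {G : Type*} (S : Set G) (x : G) : ind S x = if x ∈ S then 1 else 0 :=
  Set.indicator_apply _ _ _

lemma sum_ind' {G : Type*} [Fintype G] (S : Set G) : ∑ x, ind S x = (Nat.card S : ℝ) := by
  classical
  rw [Nat.card_eq_fintype_card, Fintype.card_subtype]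
  simp [ind_apply', Finset.sum_boole]

lemma sum_ind_translate' {G : Type*} [AddCommGroup G] [Fintype G] (S : Set G) (c : G) :
    ∑ y : G, ind S (y + c) = (Nat.card S : ℝ) := by
  rw [← sum_ind' S]
  exact Equiv.sum_comp (Equiv.addRight c) (ind S)

lemma ind_image' {G : Type*} [AddCommGroup G] (S : Set G) (x w : G) :
    ind ((fun a => a + x) '' S) w = ind S (w - x) := by
  rw [ind_apply', ind_apply']
  congr 1
  simp only [Set.mem_image, eq_iff_iff]
  constructor
  · rintro ⟨a, ha, rfl⟩; simpa using ha
  · intro h; exact ⟨w - x, h, by abel⟩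

lemma ind_col' {G : Type*} (A : Set (G × G)) (x y : G) : ind (col A x) y = ind A (x, y) := rfl

lemma card_skew' {G : Type*} [AddCommGroup G] [Fintype G] (A : Set (G × G)) :
    (Nat.card (skewCorners A) : ℝ) =
      ∑ x : G, ∑ y : G, ∑ h : G, ind A (x, y) * ind A (x, y + h) *
        (Nat.card (col A (x + h)) : ℝ) := by
  rw [← sum_ind' (skewCorners A)]
  rw [Fintype.sum_prod_type]
  refine Finset.sum_congr rfl fun x _ => ?_
  rw [Fintype.sum_prod_type]
  refine Finset.sum_congr rfl fun y _ => ?_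
  rw [Fintype.sum_prod_type, Finset.sum_comm]
  refine Finset.sum_congr rfl fun h _ => ?_
  rw [← sum_ind' (col A (x + h)), Finset.mul_sum]
  refine Finset.sum_congr rfl fun y' _ => ?_
  simp only [ind_apply', skewCorners, col, Set.mem_setOf_eq]
  by_cases h1 : (x, y) ∈ A <;> by_cases h2 : (x, y + h) ∈ A <;>
    by_cases h3 : (x + h, y') ∈ A <;> simp [h1, h2, h3]

theorem statement4 {G : Type*} [AddCommGroup G] [Fintype G] (A : Set (G × G))
    (hA : A.Nonempty) (η : ℝ) (hη : 0 ≤ η) (f D : G → ℝ)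
    (hf : f = fun y => ∑ x : G, dconv (ind (col A x)) (ind ((fun a => a + x) '' col A x)) y)
    (hD : D = fun x => (Nat.card (col A x) : ℝ))
    (h : η ≤ inprod (muFun f) (muFun D)) :
    η * (Nat.card A : ℝ) ^ 3 / (Fintype.card G : ℝ) ^ 2 ≤ (Nat.card (skewCorners A) : ℝ) := by
  classical
  obtain ⟨p, hp⟩ := hA
  haveI : Nonempty G := ⟨p.1⟩
  haveI : Nonempty ↥A := ⟨⟨p, hp⟩⟩
  set N : ℝ := (Fintype.card G : ℝ) with hNdef
  have hN : 0 < N := by rw [hNdef]; exact_mod_cast Fintype.card_pos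
  set cA : G → ℝ := fun x => (Nat.card (col A x) : ℝ) with hcAdef
  set S1 : ℝ := ∑ x, cA x with hS1def
  set S2 : ℝ := ∑ x, cA x ^ 2 with hS2def
  set T : ℝ := ∑ x : G, ∑ z : G, ∑ y : G,
      ind (col A x) z * ind (col A x) (y + z - x) * cA y with hTdef
  have hS1A : S1 = (Nat.card A : ℝ) := by
    rw [hS1def, ← sum_ind' A, Fintype.sum_prod_type]
    refine Finset.sum_congr rfl fun x _ => ?_
    simp only [hcAdef]
    rw [← sum_ind' (col A x)]
    rfl
  have hS1pos : 0 < S1 := by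
    rw [hS1A]
    exact_mod_cast Nat.card_pos
  have hCS : S1 ^ 2 ≤ N * S2 := by
    have := sq_sum_le_card_mul_sum_sq (s := (Finset.univ : Finset G)) (f := cA)
    simpa [hNdef, hS1def, hS2def] using this
  have hS2pos : 0 < S2 := by nlinarith
  have hfy : ∀ y : G, f y =
      (∑ x : G, ∑ z : G, ind (col A x) z * ind (col A x) (y + z - x)) / N := by
    intro y
    rw [hf, hNdef]
    simp only [dconv, expect, ind_image']
    rw [← Finset.sum_div]
  have htrans : ∀ x z : G, ∑ y : G, ind (col A x) (y + z - x) = cA x := by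
    intro x z
    calc ∑ y : G, ind (col A x) (y + z - x)
        = ∑ y : G, ind (col A x) (y + (z - x)) := by
          refine Finset.sum_congr rfl fun y _ => ?_
          congr 1
          abel
      _ = cA x := sum_ind_translate' _ _
  have hinner : ∀ x : G, ∑ z : G, ∑ y : G,
      ind (col A x) z * ind (col A x) (y + z - x) = cA x ^ 2 := by
    intro x
    calc ∑ z : G, ∑ y : G, ind (col A x) z * ind (col A x) (y + z - x)
        = ∑ z : G, ind (col A x) z * cA x := by
          refine Finset.sum_congr rfl fun z _ => ?_
          rw [← Finset.mul_sum, htrans x z]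
      _ = cA x ^ 2 := by
          rw [← Finset.sum_mul, sum_ind']
          simp only [hcAdef]
          ring
  have hsumf : ∑ y : G, f y = S2 / N := by
    calc ∑ y : G, f y
        = ∑ y : G, (∑ x : G, ∑ z : G, ind (col A x) z * ind (col A x) (y + z - x)) / N :=
          Finset.sum_congr rfl fun y _ => hfy y
      _ = (∑ y : G, ∑ x : G, ∑ z : G, ind (col A x) z * ind (col A x) (y + z - x)) / N :=
          (Finset.sum_div _ _ _).symm
      _ = (∑ x : G, ∑ z : G, ∑ y : G, ind (col A x) z * ind (col A x) (y + z - x)) / N := by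
          rw [Finset.sum_comm]
          congr 1
          exact Finset.sum_congr rfl fun x _ => Finset.sum_comm
      _ = S2 / N := by
          congr 1
          rw [hS2def]
          exact Finset.sum_congr rfl fun x _ => hinner x
  have hEf : expect f = S2 / N ^ 2 := by
    rw [expect, hsumf, ← hNdef, div_div, sq]
  have hED : expect D = S1 / N := by
    rw [expect, ← hNdef]
    congr 1
    rw [hS1def, hD]
  have hsumfD : ∑ y : G, f y * D y = T / N := by
    have e : ∀ y : G, f y * D y =
        (∑ x : G, ∑ z : G, ind (col A x) z * ind (col A x) (y + z - x) * cA y) / N := by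
      intro y
      rw [hfy y, hD, div_mul_eq_mul_div, Finset.sum_mul]
      congr 1
      exact Finset.sum_congr rfl fun x _ => Finset.sum_mul _ _ _
    calc ∑ y : G, f y * D y
        = (∑ y : G, ∑ x : G, ∑ z : G, ind (col A x) z * ind (col A x) (y + z - x) * cA y) / N := by
          rw [Finset.sum_congr rfl fun y _ => e y, ← Finset.sum_div]
      _ = T / N := by
          congr 1
          rw [hTdef, Finset.sum_comm]
          exact Finset.sum_congr rfl fun x _ => Finset.sum_comm
  have hC : (Nat.card (skewCorners A) : ℝ) = T := by
    rw [card_skew', hTdef]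
    refine Finset.sum_congr rfl fun x _ => Finset.sum_congr rfl fun z _ => ?_
    rw [← Equiv.sum_comp (Equiv.addLeft x)
      (fun yy => ind (col A x) z * ind (col A x) (yy + z - x) * cA yy)]
    refine Finset.sum_congr rfl fun hh _ => ?_
    simp only [Equiv.coe_addLeft]
    have e1 : x + hh + z - x = z + hh := by abel
    rw [e1, ind_col', ind_col']
  have hip : inprod (muFun f) (muFun D) = T * N / (S2 * S1) := by
    rw [inprod, expect, ← hNdef]
    have e : ∀ y : G, muFun f y * muFun D y = f y * D y / (expect f * expect D) := by
      intro y
      simp only [muFun]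
      ring
    rw [Finset.sum_congr rfl fun y _ => e y, ← Finset.sum_div, hsumfD, hEf, hED]
    field_simp
  have h' : η ≤ T * N / (S2 * S1) := hip ▸ h
  have h2 : η * (S2 * S1) ≤ T * N := (le_div_iff₀ (mul_pos hS2pos hS1pos)).mp h'
  rw [← hS1A, hC, div_le_iff₀ (pow_pos hN 2)]
  nlinarith [mul_le_mul_of_nonneg_left hCS (mul_nonneg hη hS1pos.le),
    mul_le_mul_of_nonneg_left h2 hN.le, hN.le, hS1pos.le, hS2pos.le]


end SkewPaper
end
end

section
/- There exists a constant C > 0 such that the following holds. Let G be a finite abelian group, B ⊆ G a regular Bohr set of rank r, ρ ∈ (0,1), and ν : G → ℝ_{≥0} a probability density (E_{x∈G} ν(x) = 1) supported on B_ρ. Then for every f : G → ℝ, |⟨f ∗ ν, μ_B⟩ − ⟨f, μ_B⟩| ≤ C · ‖f‖_∞ · ρ r. -/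
/-!
Since `⟨f ∗ ν, μ_B⟩ = E_t ν(t) ⟨f(· - t), μ_B⟩` and `ν` is a probability density on `B_ρ`, it
suffices that translating `f` by any `t ∈ B_ρ` moves `⟨f, μ_B⟩` by `O(‖f‖_∞ ρ r)`. By the triangle
inequality for `|1 - γ(·)|`, both `B` and `B - t` lie between `B_{1-ρ}` and `B_{1+ρ}`, so the sums
of `f` over them differ by at most `2 ‖f‖_∞ (|B_{1+ρ}| - |B_{1-ρ}|) ≤ 400 ‖f‖_∞ ρ r |B|` by
regularity, as long as `ρ r ≤ 1/100`; for larger `ρ r` the trivial bound `2 ‖f‖_∞` suffices.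
-/

open scoped BigOperators Classical

noncomputable section

namespace SkewPaper

variable {G : Type*}

section Sums

variable {ι : Type*} {f : ι → ℝ} {M : ℝ}

lemma abs_sum_le_mul_card (hM : ∀ x, |f x| ≤ M) (s : Finset ι) :
    |∑ x ∈ s, f x| ≤ M * s.card :=
  calc |∑ x ∈ s, f x| ≤ ∑ x ∈ s, |f x| := Finset.abs_sum_le_sum_abs _ _
    _ ≤ s.card • M := Finset.sum_le_card_nsmul _ _ _ fun x _ => hM x
    _ = M * s.card := by rw [nsmul_eq_mul, mul_comm]

lemma abs_sum_sub_sum_le_of_subset (hM : ∀ x, |f x| ≤ M) {L S U : Finset ι}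
    (hLS : L ⊆ S) (hSU : S ⊆ U) :
    |∑ x ∈ S, f x - ∑ x ∈ L, f x| ≤ M * (U.card - L.card) := by
  obtain hι | ⟨⟨x₀⟩⟩ := isEmpty_or_nonempty ι
  · simp [Finset.eq_empty_of_isEmpty]
  have hM0 : 0 ≤ M := (abs_nonneg _).trans (hM x₀)
  rw [← Finset.sum_sdiff_eq_sub hLS]
  refine (abs_sum_le_mul_card hM _).trans (mul_le_mul_of_nonneg_left ?_ hM0)
  rw [Finset.cast_card_sdiff hLS]
  gcongr

variable [AddCommGroup G] {f : G → ℝ}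

lemma abs_sum_comp_sub_sub_sum_le_two_mul_card (hM : ∀ x, |f x| ≤ M) (A : Finset G) (t : G) :
    |∑ x ∈ A, f (x - t) - ∑ x ∈ A, f x| ≤ 2 * M * A.card := by
  have := abs_sum_le_mul_card (fun x => hM (x - t)) A
  have := abs_sum_le_mul_card hM A
  linarith [abs_sub (∑ x ∈ A, f (x - t)) (∑ x ∈ A, f x)]

lemma abs_sum_comp_sub_sub_sum_le (hM : ∀ x, |f x| ≤ M) {A L U : Finset G} {t : G}
    (hLA : L ⊆ A) (hAU : A ⊆ U) (hL : ∀ u ∈ L, u + t ∈ A) (hU : ∀ u, u + t ∈ A → u ∈ U) :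
    |∑ x ∈ A, f (x - t) - ∑ x ∈ A, f x| ≤ 2 * M * (U.card - L.card) := by
  set At := A.map (Equiv.subRight t).toEmbedding
  have hmem (u : G) : u ∈ At ↔ u + t ∈ A := by simp [At, Finset.mem_map_equiv]
  have hshift : ∑ x ∈ A, f (x - t) = ∑ u ∈ At, f u := by simp [At, Finset.sum_map]
  have hLAt : L ⊆ At := fun u hu => (hmem u).2 (hL u hu)
  have hAtU : At ⊆ U := fun u hu => hU u ((hmem u).1 hu)
  rw [hshift]
  calc |∑ u ∈ At, f u - ∑ x ∈ A, f x|
      ≤ |∑ u ∈ At, f u - ∑ x ∈ L, f x| + |∑ x ∈ A, f x - ∑ x ∈ L, f x| :=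
        (abs_sub_le _ _ _).trans_eq (by rw [abs_sub_comm (∑ x ∈ L, f x)])
    _ ≤ 2 * M * (U.card - L.card) := by
        linarith [abs_sum_sub_sum_le_of_subset hM hLAt hAtU,
          abs_sum_sub_sum_le_of_subset hM hLA hAU]

end Sums

section Averages

variable [Fintype G]

lemma abs_le_supNorm (f : G → ℝ) (x : G) : |f x| ≤ supNorm f :=
  le_ciSup (f := fun x => |f x|) (Set.finite_range _).bddAbove x

lemma supNorm_nonneg [Nonempty G] (f : G → ℝ) : 0 ≤ supNorm f :=
  (abs_nonneg _).trans (abs_le_supNorm f (Classical.arbitrary G))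

lemma sum_eq_card_of_expect_eq_one [Nonempty G] {ν : G → ℝ} (h : expect ν = 1) :
    ∑ x, ν x = Fintype.card G := by
  have hn : (Fintype.card G : ℝ) ≠ 0 := Nat.cast_ne_zero.2 Fintype.card_ne_zero
  rwa [expect, div_eq_one_iff_eq hn] at h

lemma abs_expect_mul_sub_le [Nonempty G] {ν F : G → ℝ} {c ε : ℝ} (hν0 : ∀ x, 0 ≤ ν x)
    (hν1 : expect ν = 1) (hF : ∀ t, ν t ≠ 0 → |F t - c| ≤ ε) :
    |expect (fun t => ν t * F t) - c| ≤ ε := by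
  have hn : (0 : ℝ) < Fintype.card G := Nat.cast_pos.2 Fintype.card_pos
  have hν := sum_eq_card_of_expect_eq_one hν1
  have hterm (t : G) : |ν t * (F t - c)| ≤ ν t * ε := by
    rcases eq_or_ne (ν t) 0 with h | h
    · simp [h]
    · rw [abs_mul, abs_of_nonneg (hν0 t)]
      exact mul_le_mul_of_nonneg_left (hF t h) (hν0 t)
  have hsum : expect (fun t => ν t * F t) - c = (∑ t, ν t * (F t - c)) / Fintype.card G := by
    simp only [expect, mul_sub, Finset.sum_sub_distrib, ← Finset.sum_mul, hν]
    field_simp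
  rw [hsum, abs_div, abs_of_pos hn, div_le_iff₀ hn]
  calc |∑ t, ν t * (F t - c)| ≤ ∑ t, ν t * ε :=
        (Finset.abs_sum_le_sum_abs _ _).trans (Finset.sum_le_sum fun t _ => hterm t)
    _ = ε * Fintype.card G := by rw [← Finset.sum_mul, hν, mul_comm]

lemma inprod_muSet [Nonempty G] (A : Set G) (g : G → ℝ) :
    inprod g (muSet A) = (∑ x ∈ A.toFinset, g x) / Nat.card A := by
  have hn : (Fintype.card G : ℝ) ≠ 0 := Nat.cast_ne_zero.2 Fintype.card_ne_zero
  simp only [inprod, expect, muSet, ind, Set.indicator_apply, mul_ite, mul_one, mul_zero,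
    ← Finset.sum_filter, ← Finset.sum_mul, Set.filter_mem_univ_eq_toFinset]
  rw [mul_comm, div_mul_eq_mul_div, div_div, mul_comm (Nat.card A : ℝ)]
  exact mul_div_mul_left _ _ hn

lemma inprod_conv [AddCommGroup G] (f ν g : G → ℝ) :
    inprod (conv f ν) g = expect (fun t => ν t * inprod (fun x => f (x - t)) g) := by
  simp only [inprod, conv, expect, Finset.sum_div, Finset.mul_sum, Finset.sum_mul]
  conv_rhs => rw [Finset.sum_comm]
  refine Finset.sum_congr rfl fun x _ => Fintype.sum_equiv (Equiv.subLeft x) _ _ fun t => ?_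
  simp only [Equiv.subLeft_apply, sub_sub_cancel]
  ring

end Averages

namespace BohrSet

section Geometry

variable [AddCommGroup G] (B : BohrSet G)

lemma zero_mem_toSet {x : G} (hx : x ∈ B.toSet) : (0 : G) ∈ B.toSet := fun γ hγ => by
  simpa using (norm_nonneg _).trans (hx γ hγ)

lemma toSet_dilate_one : (B.dilate 1).toSet = B.toSet := by
  simp only [dilate, one_mul]

lemma toSet_eq_univ_of_rank_eq_zero (h : B.rank = 0) : B.toSet = Set.univ := by
  simp [toSet, Finset.card_eq_zero.mp h]

lemma natCard_dilate_one_add_sub_natCard_dilate_one_sub_le (hB : B.IsRegular) {ρ : ℝ}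
    (hρ : 0 ≤ ρ) (hρr : ρ * B.rank ≤ 1 / 100) :
    (Nat.card (B.dilate (1 + ρ)).toSet : ℝ) - Nat.card (B.dilate (1 - ρ)).toSet ≤
      200 * (ρ * B.rank) * Nat.card B.toSet := by
  rcases Nat.eq_zero_or_pos B.rank with hr | hr
  -- In rank 0 regularity says nothing (`1 / (100 * 0) = 0`), but every dilate is all of `G`.
  · have huniv (a : ℝ) : (B.dilate a).toSet = Set.univ := toSet_eq_univ_of_rank_eq_zero _ hr
    simp [huniv, hr]
  have hρ' : ρ ≤ 1 / (100 * B.rank) := by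
    rw [le_div_iff₀ (by positivity)]
    linarith
  obtain ⟨hup, hdown⟩ := hB ρ hρ hρ'
  linarith

variable [Finite G]

lemma norm_one_sub_apply_add_le (γ : AddChar G ℂ) (x y : G) :
    ‖1 - γ (x + y)‖ ≤ ‖1 - γ x‖ + ‖1 - γ y‖ := by
  rw [AddChar.map_add_eq_mul, show 1 - γ x * γ y = (1 - γ x) + γ x * (1 - γ y) by ring]
  refine (norm_add_le _ _).trans_eq ?_
  rw [norm_mul, AddChar.norm_apply, one_mul]

lemma norm_one_sub_apply_neg (γ : AddChar G ℂ) (x : G) : ‖1 - γ (-x)‖ = ‖1 - γ x‖ := by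
  rw [AddChar.map_neg_eq_conj, ← Complex.norm_conj (1 - γ x), map_sub, map_one]

variable {B}

lemma add_mem_dilate {a b : ℝ} {x y : G} (hx : x ∈ (B.dilate a).toSet)
    (hy : y ∈ (B.dilate b).toSet) : x + y ∈ (B.dilate (a + b)).toSet := fun γ hγ =>
  calc ‖1 - γ (x + y)‖ ≤ ‖1 - γ x‖ + ‖1 - γ y‖ := norm_one_sub_apply_add_le γ x y
    _ ≤ a * B.width + b * B.width := add_le_add (hx γ hγ) (hy γ hγ)
    _ = (a + b) * B.width := (add_mul _ _ _).symm

lemma neg_mem_dilate {a : ℝ} {x : G} (hx : x ∈ (B.dilate a).toSet) :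
    -x ∈ (B.dilate a).toSet := fun γ hγ => by
  simpa only [norm_one_sub_apply_neg] using hx γ hγ

lemma add_mem_of_mem_dilate_one_sub {ρ : ℝ} {t u : G} (ht : t ∈ (B.dilate ρ).toSet)
    (hu : u ∈ (B.dilate (1 - ρ)).toSet) : u + t ∈ B.toSet := by
  simpa [toSet_dilate_one] using add_mem_dilate hu ht

lemma mem_dilate_one_add_of_add_mem {ρ : ℝ} {t u : G} (ht : t ∈ (B.dilate ρ).toSet)
    (hu : u + t ∈ B.toSet) : u ∈ (B.dilate (1 + ρ)).toSet := by
  rw [← toSet_dilate_one] at hu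
  simpa using add_mem_dilate hu (neg_mem_dilate ht)

end Geometry

variable [AddCommGroup G] [Fintype G] {B : BohrSet G} {ρ : ℝ} {t : G}

lemma abs_sum_comp_sub_sub_sum_le_of_isRegular (hB : B.IsRegular) (hρ : 0 ≤ ρ)
    (ht : t ∈ (B.dilate ρ).toSet) (f : G → ℝ) :
    |∑ x ∈ B.toSet.toFinset, f (x - t) - ∑ x ∈ B.toSet.toFinset, f x| ≤
      400 * supNorm f * (ρ * B.rank) * Nat.card B.toSet := by
  have hf := abs_le_supNorm f
  have hf0 := supNorm_nonneg f
  rw [Nat.card_eq_card_toFinset]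
  -- Regularity only controls `ρ r ≤ 1/100`; beyond that the trivial bound is good enough.
  by_cases hρr : ρ * B.rank ≤ 1 / 100
  · have h0 : (0 : G) ∈ (B.dilate ρ).toSet := zero_mem_toSet _ ht
    have hcard := B.natCard_dilate_one_add_sub_natCard_dilate_one_sub_le hB hρ hρr
    simp only [Nat.card_eq_card_toFinset] at hcard
    calc _ ≤ 2 * supNorm f * ((B.dilate (1 + ρ)).toSet.toFinset.card -
            (B.dilate (1 - ρ)).toSet.toFinset.card) := by
          refine abs_sum_comp_sub_sub_sum_le hf ?_ ?_ ?_ ?_ <;> intro u <;>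
            simp only [Set.mem_toFinset]
          · simpa using add_mem_of_mem_dilate_one_sub (u := u) h0
          · simpa using mem_dilate_one_add_of_add_mem (u := u) h0
          · exact add_mem_of_mem_dilate_one_sub ht
          · exact mem_dilate_one_add_of_add_mem ht
      _ ≤ 2 * supNorm f * (200 * (ρ * B.rank) * B.toSet.toFinset.card) := by gcongr
      _ = _ := by ring
  · calc _ ≤ 2 * supNorm f * B.toSet.toFinset.card :=
          abs_sum_comp_sub_sub_sum_le_two_mul_card hf _ t
      _ ≤ 400 * (ρ * B.rank) * supNorm f * B.toSet.toFinset.card := by gcongr; linarith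
      _ = _ := by ring

lemma abs_inprod_comp_sub_mu_sub_inprod_mu_le (hB : B.IsRegular) (hρ : 0 ≤ ρ)
    (ht : t ∈ (B.dilate ρ).toSet) (f : G → ℝ) :
    |inprod (fun x => f (x - t)) B.mu - inprod f B.mu| ≤ 400 * supNorm f * (ρ * B.rank) := by
  have hf0 := supNorm_nonneg f
  rw [mu, inprod_muSet, inprod_muSet, ← sub_div, abs_div, Nat.abs_cast]
  exact div_le_of_le_mul₀ (Nat.cast_nonneg _) (by positivity)
    (abs_sum_comp_sub_sub_sum_le_of_isRegular hB hρ ht f)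

end BohrSet

theorem statement5 :
    ∃ C : ℝ, 0 < C ∧ ∀ (G : Type) [AddCommGroup G] [Fintype G],
      ∀ B : BohrSet G, B.IsRegular →
      ∀ ρ : ℝ, 0 < ρ → ρ < 1 →
      ∀ ν : G → ℝ, (∀ x, 0 ≤ ν x) → expect ν = 1 →
        (∀ x, x ∉ (B.dilate ρ).toSet → ν x = 0) →
      ∀ f : G → ℝ,
        |inprod (conv f ν) B.mu - inprod f B.mu| ≤ C * supNorm f * (ρ * B.rank) := by
  refine ⟨400, by norm_num, fun G _ _ B hB ρ hρ _ ν hν0 hν1 hνB f => ?_⟩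
  rw [inprod_conv]
  refine abs_expect_mul_sub_le hν0 hν1 fun t ht => ?_
  exact B.abs_inprod_comp_sub_mu_sub_inprod_mu_le hB hρ.le (not_imp_comm.1 (hνB t) ht) f

end SkewPaper
end
end

section
/- Let q be a prime power, n ≥ 1, r ≥ 1, λ > 1, and let {A_i}_{i∈S} be an (r, λ)-simultaneously spread collection of subsets of 𝔽_q^n with α = Σ_{i∈S} (|A_i|/q^n)² > 0. Then for every subspace V ⊆ 𝔽_q^n of codimension at most r, ‖(α^{-1} Σ_{i∈S} 1_{A_i} ∘ 1_{A_i}) ∗ μ_V‖_∞ ≤ √λ. -/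
open scoped BigOperators Classical

noncomputable section

namespace SkewPaper

variable {G : Type*}

section Helpers

lemma ind_nonneg {H : Type*} {A : Set H} (x : H) : 0 ≤ ind A x :=
  Set.indicator_nonneg (fun _ _ => zero_le_one) x

lemma card_set_eq_sum {H : Type*} [Fintype H] (A : Set H) :
    ((Nat.card A : ℝ)) = ∑ x, ind A x := by
  classical
  rw [Nat.card_eq_fintype_card, Fintype.card_subtype]
  have h : ∀ x, ind A x = if x ∈ A then (1:ℝ) else 0 := fun x => Set.indicator_apply _ _ _
  simp only [h, Finset.sum_boole]

lemma card_inter_eq_sum {H : Type*} [Fintype H] (A B : Set H) :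
    ((Nat.card ↥(A ∩ B) : ℝ)) = ∑ x, ind A x * ind B x := by
  rw [card_set_eq_sum]
  refine Finset.sum_congr rfl fun x _ => ?_
  by_cases hA : x ∈ A <;> by_cases hB : x ∈ B <;>
    simp [ind, Set.indicator_apply, hA, hB]

lemma card_shift_inter {H : Type*} [Fintype H] [AddCommGroup H] (A B : Set H) (u : H) :
    ((Nat.card ↥(((fun a => a - u) '' A) ∩ B) : ℝ)) = ∑ v, ind A (v + u) * ind B v := by
  have h : ((fun a => a - u) '' A) = {v | v + u ∈ A} := by
    ext v
    simp only [Set.mem_image, Set.mem_setOf_eq, sub_eq_iff_eq_add]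
    constructor
    · rintro ⟨a, ha, rfl⟩; exact ha
    · intro hv; exact ⟨v + u, hv, rfl⟩
  rw [h, card_inter_eq_sum]
  rfl

end Helpers

theorem statement6 {F : Type*} [Field F] [Fintype F] {n : ℕ} (hn : 1 ≤ n)
    {ι : Type*} [Fintype ι] (r : ℕ) (hr : 1 ≤ r) (lam : ℝ) (hlam : 1 < lam)
    (A : ι → Set (Fin n → F)) (hspread : SimSpread A r lam) (α : ℝ)
    (hα : α = ∑ i, ((Nat.card (A i) : ℝ) / ((Fintype.card F : ℝ) ^ n)) ^ 2) (hα0 : 0 < α)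
    (V : Submodule F (Fin n → F)) (hV : n ≤ Module.finrank F V + r) :
    supNorm (conv (fun y => α⁻¹ * ∑ i, dconv (ind (A i)) (ind (A i)) y)
      (muSet (V : Set (Fin n → F)))) ≤ Real.sqrt lam := by
  classical
  have hlam0 : (0:ℝ) ≤ lam := le_of_lt (lt_trans one_pos hlam)
  have hNpos : (0:ℝ) < (Fintype.card (Fin n → F) : ℝ) := by exact_mod_cast Fintype.card_pos
  set N : ℝ := (Fintype.card (Fin n → F) : ℝ) with hNdef
  set VC : ℝ := (Nat.card (V : Set (Fin n → F)) : ℝ) with hVCdef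
  have hVCpos : (0:ℝ) < VC := by
    have hne : Nonempty ↥(V : Set (Fin n → F)) := ⟨⟨0, V.zero_mem⟩⟩
    have h := Nat.card_pos (α := ↥(V : Set (Fin n → F)))
    rw [hVCdef]
    exact_mod_cast h
  have hNF : N = ((Fintype.card F : ℝ)) ^ n := by
    rw [hNdef]
    norm_cast
    rw [Fintype.card_fun, Fintype.card_fin]
  set c : ι → (Fin n → F) → ℝ :=
    fun i w => ∑ v, ind (A i) (v + w) * ind (V : Set (Fin n → F)) v with hcdef
  have hc_nonneg : ∀ i w, 0 ≤ c i w := fun i w =>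
    Finset.sum_nonneg fun v _ => mul_nonneg (ind_nonneg _) (ind_nonneg _)
  obtain ⟨u, hu⟩ : ∃ u : ι → (Fin n → F), ∀ i w, c i w ≤ c i (u i) := by
    choose u hu using fun i => Finite.exists_max (c i)
    exact ⟨u, hu⟩
  -- spread bound at the maximizers
  have hSp : ∑ i, (c i (u i) / VC) ^ 2 ≤ lam * α := by
    have h := hspread V hV u
    rw [← hα] at h
    have e : ∀ i, c i (u i)
        = ((Nat.card ↥(((fun a => a - u i) '' A i) ∩ (V : Set (Fin n → F))) : ℝ)) :=
      fun i => (card_shift_inter _ _ _).symm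
    calc ∑ i, (c i (u i) / VC) ^ 2
        = ∑ i, (((Nat.card ↥(((fun a => a - u i) '' A i) ∩ (V : Set (Fin n → F))) : ℝ))
            / VC) ^ 2 := by
          refine Finset.sum_congr rfl fun i _ => ?_
          rw [e i]
      _ ≤ lam * α := h
  -- pointwise identity for the convolution
  have inner_eq : ∀ (i : ι) (x z : Fin n → F),
      (∑ y, ind (A i) (y + z) * ind (V : Set (Fin n → F)) (x - y)) = c i (x + z) := by
    intro i x z
    rw [hcdef]
    refine Fintype.sum_equiv (Equiv.subRight x) _ _ fun y => ?_
    have h1 : y + z = (y - x) + (x + z) := by abel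
    have hmem : ((x - y) ∈ (V : Set (Fin n → F))) ↔ ((y - x) ∈ (V : Set (Fin n → F))) := by
      rw [show x - y = -(y - x) by abel]
      simp only [SetLike.mem_coe]
      exact neg_mem_iff
    have h2 : ind (V : Set (Fin n → F)) (x - y) = ind (V : Set (Fin n → F)) (y - x) := by
      simp only [ind, Set.indicator_apply]
      simp [hmem]
    rw [h1, h2]
    rfl
  have key : ∀ x, conv (fun y => α⁻¹ * ∑ i, dconv (ind (A i)) (ind (A i)) y) (muSet (V : Set (Fin n → F))) x = α⁻¹ * (N * VC)⁻¹ * ∑ i, ∑ z, ind (A i) z * c i (x + z) := by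
    intro x
    have step1 : conv (fun y => α⁻¹ * ∑ i, dconv (ind (A i)) (ind (A i)) y) (muSet (V : Set (Fin n → F))) x = α⁻¹ * (N * VC)⁻¹ * ∑ y, (∑ i, ∑ z, ind (A i) z * ind (A i) (y + z)) * ind (V : Set (Fin n → F)) (x - y) := by
      unfold conv dconv muSet expect
      simp only [← hNdef, ← hVCdef]
      rw [div_eq_mul_inv, Finset.sum_mul, Finset.mul_sum]
      refine Finset.sum_congr rfl fun y _ => ?_
      rw [show (∑ i, (∑ z, ind (A i) z * ind (A i) (y + z)) / N) = (∑ i, ∑ z, ind (A i) z * ind (A i) (y + z)) / N from (Finset.sum_div _ _ _).symm]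
      field_simp
    rw [step1]
    congr 1
    calc ∑ y, (∑ i, ∑ z, ind (A i) z * ind (A i) (y + z)) * ind (V : Set (Fin n → F)) (x - y)
        = ∑ y, ∑ i, ∑ z, ind (A i) z * ind (A i) (y + z) * ind (V : Set (Fin n → F)) (x - y) := by
          refine Finset.sum_congr rfl fun y _ => ?_
          rw [Finset.sum_mul]
          exact Finset.sum_congr rfl fun i _ => Finset.sum_mul _ _ _
      _ = ∑ i, ∑ y, ∑ z, ind (A i) z * ind (A i) (y + z) * ind (V : Set (Fin n → F)) (x - y) :=
          Finset.sum_comm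
      _ = ∑ i, ∑ z, ∑ y, ind (A i) z * ind (A i) (y + z) * ind (V : Set (Fin n → F)) (x - y) :=
          Finset.sum_congr rfl fun i _ => Finset.sum_comm
      _ = ∑ i, ∑ z, ind (A i) z * c i (x + z) := by
          refine Finset.sum_congr rfl fun i _ => Finset.sum_congr rfl fun z _ => ?_
          rw [← inner_eq i x z, Finset.mul_sum]
          exact Finset.sum_congr rfl fun y _ => mul_assoc _ _ _
  -- the main bound
  have hT : ∀ x, ∑ i, ∑ z, ind (A i) z * c i (x + z) ≤ N * VC * α * Real.sqrt lam := by
    intro x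
    have hb1 : ∑ i, ∑ z, ind (A i) z * c i (x + z)
        ≤ ∑ i, (Nat.card (A i) : ℝ) * c i (u i) := by
      refine Finset.sum_le_sum fun i _ => ?_
      calc ∑ z, ind (A i) z * c i (x + z)
          ≤ ∑ z, ind (A i) z * c i (u i) :=
            Finset.sum_le_sum fun z _ =>
              mul_le_mul_of_nonneg_left (hu i (x + z)) (ind_nonneg _)
        _ = (Nat.card (A i) : ℝ) * c i (u i) := by
            rw [← Finset.sum_mul, ← card_set_eq_sum]
    have hA2 : ∑ i, ((Nat.card (A i) : ℝ)) ^ 2 = N ^ 2 * α := by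
      rw [hα, Finset.mul_sum]
      refine Finset.sum_congr rfl fun i _ => ?_
      rw [← hNF, div_pow]
      field_simp
    have hc2 : ∑ i, (c i (u i)) ^ 2 ≤ VC ^ 2 * (lam * α) := by
      have h := hSp
      have : ∑ i, (c i (u i) / VC) ^ 2 = (∑ i, (c i (u i)) ^ 2) / VC ^ 2 := by
        rw [Finset.sum_div]
        exact Finset.sum_congr rfl fun i _ => div_pow _ _ _
      rw [this, div_le_iff₀ (by positivity)] at h
      linarith [h]
    have hCSnn : 0 ≤ ∑ i, (Nat.card (A i) : ℝ) * c i (u i) :=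
      Finset.sum_nonneg fun i _ => mul_nonneg (Nat.cast_nonneg _) (hc_nonneg i _)
    have hsq : (∑ i, (Nat.card (A i) : ℝ) * c i (u i)) ^ 2
        ≤ (N * VC * α * Real.sqrt lam) ^ 2 := by
      calc (∑ i, (Nat.card (A i) : ℝ) * c i (u i)) ^ 2
          ≤ (∑ i, ((Nat.card (A i) : ℝ)) ^ 2) * ∑ i, (c i (u i)) ^ 2 :=
            Finset.sum_mul_sq_le_sq_mul_sq _ _ _
        _ ≤ (N ^ 2 * α) * (VC ^ 2 * (lam * α)) := by
            rw [hA2]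
            exact mul_le_mul_of_nonneg_left hc2 (by positivity)
        _ = (N * VC * α * Real.sqrt lam) ^ 2 := by
            rw [mul_pow, mul_pow, mul_pow, Real.sq_sqrt hlam0]
            ring
    have := Real.sqrt_le_sqrt hsq
    rw [Real.sqrt_sq hCSnn, Real.sqrt_sq (by positivity)] at this
    exact le_trans hb1 this
  have hBound : ∀ x, conv (fun y => α⁻¹ * ∑ i, dconv (ind (A i)) (ind (A i)) y) (muSet (V : Set (Fin n → F))) x ≤ Real.sqrt lam := by
    intro x
    rw [key x]
    have h1 : α⁻¹ * (N * VC)⁻¹ * ∑ i, ∑ z, ind (A i) z * c i (x + z) ≤ α⁻¹ * (N * VC)⁻¹ * (N * VC * α * Real.sqrt lam) :=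
      mul_le_mul_of_nonneg_left (hT x) (by positivity)
    refine le_trans h1 (le_of_eq ?_)
    field_simp
  have hNonneg : ∀ x, 0 ≤ conv (fun y => α⁻¹ * ∑ i, dconv (ind (A i)) (ind (A i)) y) (muSet (V : Set (Fin n → F))) x := by
    intro x
    rw [key x]
    have : 0 ≤ ∑ i, ∑ z, ind (A i) z * c i (x + z) :=
      Finset.sum_nonneg fun i _ => Finset.sum_nonneg fun z _ =>
        mul_nonneg (ind_nonneg _) (hc_nonneg i _)
    positivity
  unfold supNorm
  refine Real.iSup_le (fun x => ?_) (Real.sqrt_nonneg _)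
  rw [abs_of_nonneg (hNonneg x)]
  exact hBound x


end SkewPaper
end
end

section
/- There exists a constant C > 0 such that the following holds. Let q be a prime power, n ≥ 1, ε ∈ (0,1), r ≥ 1 an integer, d ≥ 0, and {A_g}_{g∈𝔽_q^n} a collection of subsets of 𝔽_q^n with Σ_g |A_g|² ≥ 2^{−d} q^{3n}. Then there exist a subspace V ⊆ 𝔽_q^n of codimension at most C·r(d+1)/ε, shifts {x_g}_{g∈𝔽_q^n} in 𝔽_q^n, and w ∈ 𝔽_q^n such that (1) the collection {(A_g − x_g) ∩ V}_{g ∈ V+w} is (r, 1+ε)-simultaneously spread in V, and (2) Σ_{g∈V+w} |(A_g − x_g) ∩ V|² ≥ 2^{−d} |V|³. -/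
/-!
Density increment. For a subspace `V`, shifts `x` and a coset `w + V`, the density
`Σ_{g ∈ w + V} |(A_g - x_g) ∩ V|² / |V|³` is at most `1`, and for `V = 𝔽_q^n` it is at least
`2^{-d}`. If the slices `(A_g - x_g) ∩ V` are not `(r, 1 + ε)`-spread in `V`, the witnessing
subspace `V₀ ≤ V` of codimension `≤ r` and shifts `y_g ∈ V` give, on average over the cosets of
`V₀` in `w + V`, a density larger by the factor `1 + ε`; some coset `w₁ + V₀` does at least as well
as the average. Since `2^ε ≤ 1 + ε`, the density would exceed `1` after `K ≤ 2(d + 1)/ε`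
increments, so the process stops at a spread configuration of codimension at most `rK`.
-/

open scoped BigOperators Classical

noncomputable section

namespace SkewPaper

variable {G : Type*}

section Cosets

variable [AddCommGroup G]

theorem image_sub_image_sub_inter {H₀ H : AddSubgroup G} (hle : H₀ ≤ H) (A : Set G) (x : G)
    {y : G} (hy : y ∈ H) :
    (fun a => a - y) '' ((fun a => a - x) '' A ∩ H) ∩ H₀ = (fun a => a - (x + y)) '' A ∩ H₀ := by
  ext a
  simp only [Set.mem_inter_iff, Set.mem_image, SetLike.mem_coe]
  constructor
  · rintro ⟨⟨b, ⟨⟨c, hc, rfl⟩, -⟩, rfl⟩, ha⟩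
    exact ⟨⟨c, hc, by abel⟩, ha⟩
  · rintro ⟨⟨c, hc, rfl⟩, ha⟩
    have hcx : c - x = c - (x + y) + y := by abel
    exact ⟨⟨c - x, ⟨⟨c, hc, rfl⟩, hcx ▸ H.add_mem (hle ha) hy⟩, by abel⟩, ha⟩

-- The `Fintype` instances on cosets are arguments so that these lemmas apply to sums elaborated
-- with any decidability instances, e.g. those of `Fin n → F` at the call site.
theorem sum_image_add_right (s : Set G) (w : G) [Fintype s] [Fintype ((fun v => v + w) '' s)]
    (f : G → ℝ) :
    ∑ g : ↥((fun v => v + w) '' s), f g = ∑ h : s, f (h + w) :=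
  (Fintype.sum_equiv (Equiv.Set.image _ s (add_left_injective w)) _ _ fun _ => rfl).symm

variable [Fintype G]

theorem sum_addSubgroup_add_left (H : AddSubgroup G) {b : G} (hb : b ∈ H) (φ : G → ℝ) :
    ∑ a : (H : Set G), φ (b + a) = ∑ a : (H : Set G), φ a :=
  Fintype.sum_equiv (Equiv.addLeft (⟨b, hb⟩ : H)) _ _ fun _ => rfl

theorem exists_coset_sum_le {H₀ H : AddSubgroup G} (hle : H₀ ≤ H) (w : G)
    [Fintype ((fun v => v + w) '' (H : Set G))]
    [∀ w₁, Fintype ((fun v => v + w₁) '' (H₀ : Set G))] (f : G → ℝ) :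
    ∃ w₁ : G, (Nat.card (H₀ : Set G) : ℝ) * ∑ g : ↥((fun v => v + w) '' (H : Set G)), f g ≤
      (Nat.card (H : Set G) : ℝ) * ∑ g : ↥((fun v => v + w₁) '' (H₀ : Set G)), f g := by
  -- Each `g ∈ w + H` lies in exactly `|H₀|` of the cosets `a + w + H₀`, `a ∈ H`.
  have hdouble : ∑ a : (H : Set G), ∑ b : (H₀ : Set G), f (b + (a + w)) =
      (Nat.card (H₀ : Set G) : ℝ) * ∑ a : (H : Set G), f (a + w) := by
    rw [Finset.sum_comm]
    simp_rw [← add_assoc]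
    rw [Finset.sum_congr rfl fun (b : (H₀ : Set G)) _ =>
      sum_addSubgroup_add_left H (hle b.2) (fun a => f (a + w)),
      Finset.sum_const, Finset.card_univ, nsmul_eq_mul, Nat.card_eq_fintype_card]
  have haverage : ∑ _a : (H : Set G),
        (Nat.card (H₀ : Set G) : ℝ) * ∑ a : (H : Set G), f (a + w) =
      ∑ a : (H : Set G), (Nat.card (H : Set G) : ℝ) * ∑ b : (H₀ : Set G), f (b + (a + w)) := by
    rw [Finset.sum_const, Finset.card_univ, ← Finset.mul_sum, hdouble, nsmul_eq_mul]
    simp only [Nat.card_eq_fintype_card]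
  obtain ⟨a, -, ha⟩ := Finset.exists_le_of_sum_le Finset.univ_nonempty haverage.le
  refine ⟨a + w, ?_⟩
  rwa [sum_image_add_right, sum_image_add_right]

end Cosets

section DensityIncrement

variable {F : Type*} [Field F] {n : ℕ} (A : (Fin n → F) → Set (Fin n → F))
  (V : Submodule F (Fin n → F)) (x : (Fin n → F) → Fin n → F) (w : Fin n → F)

def slice (g : Fin n → F) : Set (Fin n → F) :=
  (fun a => a - x g) '' A g ∩ V

theorem slice_top_zero (g : Fin n → F) : slice A ⊤ (fun _ => 0) g = A g := by
  simp [slice]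

variable [Fintype F]

def energy : ℝ :=
  ∑ g : ↥((fun v => v + w) '' (V : Set (Fin n → F))), (Nat.card (slice A V x g) : ℝ) ^ 2

def density : ℝ :=
  energy A V x w / (Nat.card (V : Set (Fin n → F)) : ℝ) ^ 3

theorem card_coe_submodule_pos : 0 < (Nat.card (V : Set (Fin n → F)) : ℝ) := by
  have : Nonempty (V : Set (Fin n → F)) := ⟨⟨0, V.zero_mem⟩⟩
  exact_mod_cast Nat.card_pos

theorem card_coe_top : Nat.card ((⊤ : Submodule F (Fin n → F)) : Set (Fin n → F)) =
    Fintype.card F ^ n := by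
  rw [Submodule.top_coe, Nat.card_coe_set_eq, Set.ncard_univ, Nat.card_eq_fintype_card,
    Fintype.card_fun, Fintype.card_fin]

theorem energy_le_card_pow_three :
    energy A V x w ≤ (Nat.card (V : Set (Fin n → F)) : ℝ) ^ 3 := by
  have hslice : ∀ g, (Nat.card (slice A V x g) : ℝ) ^ 2 ≤ (Nat.card (V : Set (Fin n → F))) ^ 2 :=
    fun g => by
      gcongr
      exact Nat.card_mono (Set.toFinite _) Set.inter_subset_right
  calc energy A V x w
      ≤ ∑ _h : (V : Set (Fin n → F)), (Nat.card (V : Set (Fin n → F)) : ℝ) ^ 2 := by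
        refine (sum_image_add_right (V : Set (Fin n → F)) w
          fun g => (Nat.card (slice A V x g) : ℝ) ^ 2).trans_le ?_
        exact Finset.sum_le_sum fun _ _ => hslice _
    _ = (Nat.card (V : Set (Fin n → F)) : ℝ) ^ 3 := by
        rw [Finset.sum_const, Finset.card_univ, nsmul_eq_mul, Nat.card_eq_fintype_card]
        ring

theorem density_le_one : density A V x w ≤ 1 :=
  div_le_one_of_le₀ (energy_le_card_pow_three A V x w) (by positivity)

theorem energy_top : energy A ⊤ (fun _ => 0) 0 = ∑ g, (Nat.card (A g) : ℝ) ^ 2 :=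
  Fintype.sum_equiv (Equiv.subtypeUnivEquiv fun g => ⟨g, trivial, add_zero g⟩) _ _
    fun g => by rw [slice_top_zero]; rfl

theorem density_top :
    density A ⊤ (fun _ => 0) 0 =
      (∑ g, (Nat.card (A g) : ℝ) ^ 2) / (Fintype.card F : ℝ) ^ (3 * n) := by
  rw [density, energy_top, card_coe_top, Nat.cast_pow, ← pow_mul, mul_comm n]

variable {A V x w}

theorem exists_density_gt_of_not_simSpreadIn {r : ℕ} {lam : ℝ}
    (h : ¬ SimSpreadIn V
      (fun g : ↥((fun v => v + w) '' (V : Set (Fin n → F))) => slice A V x g) r lam) :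
    ∃ V₀ : Submodule F (Fin n → F), V₀ ≤ V ∧ Module.finrank F V ≤ Module.finrank F V₀ + r ∧
      ∃ x₁ w₁, lam * density A V x w < density A V₀ x₁ w₁ := by
  simp only [SimSpreadIn, not_forall, not_le] at h
  obtain ⟨V₀, hle, hrank, y, hy, hlt⟩ := h
  let x₁ : (Fin n → F) → Fin n → F := fun g =>
    if hg : g ∈ (fun v => v + w) '' (V : Set (Fin n → F)) then x g + y ⟨g, hg⟩ else 0
  have hslice : ∀ g : ↥((fun v => v + w) '' (V : Set (Fin n → F))),
      (fun a => a - y g) '' slice A V x g ∩ V₀ = slice A V₀ x₁ g := by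
    intro g
    simp only [slice, x₁, dif_pos g.2]
    exact image_sub_image_sub_inter ((Submodule.toAddSubgroup_le _ _).2 hle) (A g) (x g) (hy g)
  have hcoset : ∃ w₁, (Nat.card (V₀ : Set (Fin n → F)) : ℝ) *
        ∑ g : ↥((fun v => v + w) '' (V : Set (Fin n → F))), (Nat.card (slice A V₀ x₁ g) : ℝ) ^ 2 ≤
      (Nat.card (V : Set (Fin n → F)) : ℝ) * energy A V₀ x₁ w₁ :=
    exists_coset_sum_le ((Submodule.toAddSubgroup_le _ _).2 hle) w
      fun g => (Nat.card (slice A V₀ x₁ g) : ℝ) ^ 2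
  obtain ⟨w₁, hw₁⟩ := hcoset
  refine ⟨V₀, hle, hrank, x₁, w₁, ?_⟩
  rw [density, density]
  set S := ∑ g : ↥((fun v => v + w) '' (V : Set (Fin n → F))),
    (Nat.card (slice A V₀ x₁ g) : ℝ) ^ 2
  set v := (Nat.card (V : Set (Fin n → F)) : ℝ)
  set v₀ := (Nat.card (V₀ : Set (Fin n → F)) : ℝ)
  have hv : 0 < v := card_coe_submodule_pos V
  have hv₀ : 0 < v₀ := card_coe_submodule_pos V₀
  have hlt' : lam * (energy A V x w / v ^ 2) < S / v₀ ^ 2 := by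
    simp only [div_pow, ← Finset.sum_div, hslice] at hlt
    exact hlt
  calc lam * (energy A V x w / v ^ 3) = lam * (energy A V x w / v ^ 2) / v := by
        field_simp
    _ < S / v₀ ^ 2 / v := by gcongr
    _ ≤ energy A V₀ x₁ w₁ / v₀ ^ 3 := by
        rw [div_div, div_le_div_iff₀ (by positivity) (by positivity)]
        nlinarith

variable (A)

/-- `j` bounds the number of increments still possible: each one multiplies the density by
`1 + ε`, and the density never exceeds `1`. -/
theorem exists_simSpreadIn_of_le_density (r : ℕ) {ε δ : ℝ} (hε : 0 ≤ ε) (hδ : 0 ≤ δ) :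
    ∀ (j m : ℕ) (V : Submodule F (Fin n → F)) (x : (Fin n → F) → Fin n → F) (w : Fin n → F),
      1 < δ * (1 + ε) ^ (m + j) → δ * (1 + ε) ^ m ≤ density A V x w →
      n ≤ Module.finrank F V + r * m →
      ∃ (V₁ : Submodule F (Fin n → F)) (x₁ : (Fin n → F) → Fin n → F) (w₁ : Fin n → F),
        n ≤ Module.finrank F V₁ + r * (m + j) ∧
        SimSpreadIn V₁
          (fun g : ↥((fun v => v + w₁) '' (V₁ : Set (Fin n → F))) => slice A V₁ x₁ g) r (1 + ε) ∧
        δ ≤ density A V₁ x₁ w₁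
  | 0, m, V, x, w, hbound, hdens, _ =>
    absurd (hdens.trans (density_le_one A V x w)) (not_le.2 hbound)
  | j + 1, m, V, x, w, hbound, hdens, hcodim => by
    by_cases hspread : SimSpreadIn V
        (fun g : ↥((fun v => v + w) '' (V : Set (Fin n → F))) => slice A V x g) r (1 + ε)
    · refine ⟨V, x, w, hcodim.trans (by gcongr; omega), hspread, le_trans ?_ hdens⟩
      exact le_mul_of_one_le_right hδ (one_le_pow₀ (by linarith))
    · obtain ⟨V₀, -, hrank, x₁, w₁, hgain⟩ := exists_density_gt_of_not_simSpreadIn hspread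
      have hdens₀ : δ * (1 + ε) ^ (m + 1) ≤ density A V₀ x₁ w₁ :=
        calc δ * (1 + ε) ^ (m + 1) = (1 + ε) * (δ * (1 + ε) ^ m) := by ring
          _ ≤ (1 + ε) * density A V x w := mul_le_mul_of_nonneg_left hdens (by linarith)
          _ ≤ density A V₀ x₁ w₁ := hgain.le
      have hcodim₀ : n ≤ Module.finrank F V₀ + r * (m + 1) := by
        rw [mul_add_one]; omega
      obtain ⟨V₁, x₁, w₁, hcodim₁, hspread₁, hdens₁⟩ :=
        exists_simSpreadIn_of_le_density r hε hδ j (m + 1) V₀ x₁ w₁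
          (by rwa [add_right_comm, add_assoc]) hdens₀ hcodim₀
      exact ⟨V₁, x₁, w₁, by rwa [add_right_comm, add_assoc] at hcodim₁, hspread₁, hdens₁⟩

end DensityIncrement

theorem exists_two_rpow_lt_one_add_pow {ε d : ℝ} (hε₀ : 0 < ε) (hε₁ : ε ≤ 1) (hd : 0 ≤ d) :
    ∃ K : ℕ, (2 : ℝ) ^ d < (1 + ε) ^ K ∧ (K : ℝ) ≤ 2 * (d + 1) / ε := by
  set K := ⌈(d + 1) / ε⌉₊
  have hK : (d + 1) / ε ≤ K := Nat.le_ceil _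
  refine ⟨K, ?_, ?_⟩
  · have hbase : (2 : ℝ) ^ ε ≤ 1 + ε := by
      simpa [one_add_one_eq_two] using
        rpow_one_add_le_one_add_mul_self (s := 1) (by norm_num) hε₀.le hε₁
    calc (2 : ℝ) ^ d < 2 ^ (ε * K) := by
          apply Real.rpow_lt_rpow_of_exponent_lt one_lt_two
          rw [div_le_iff₀ hε₀] at hK
          linarith
      _ = (2 ^ ε) ^ K := Real.rpow_mul_natCast zero_le_two ε K
      _ ≤ (1 + ε) ^ K := by gcongr
  · have hone : 1 ≤ (d + 1) / ε := by rw [one_le_div hε₀]; linarith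
    calc (K : ℝ) ≤ (d + 1) / ε + 1 := (Nat.ceil_lt_add_one (by positivity)).le
      _ ≤ 2 * (d + 1) / ε := by rw [mul_div_assoc]; linarith

theorem statement8 :
    ∃ C : ℝ, 0 < C ∧ ∀ (F : Type) [Field F] [Fintype F], ∀ n : ℕ, 1 ≤ n →
      ∀ ε : ℝ, 0 < ε → ε < 1 → ∀ r : ℕ, 1 ≤ r → ∀ d : ℝ, 0 ≤ d →
      ∀ A : (Fin n → F) → Set (Fin n → F),
        (2 : ℝ) ^ (-d) * (Fintype.card F : ℝ) ^ (3 * n) ≤ ∑ g, (Nat.card (A g) : ℝ) ^ 2 →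
        ∃ (V : Submodule F (Fin n → F)) (x : (Fin n → F) → Fin n → F) (w : Fin n → F),
          (n : ℝ) - (Module.finrank F V : ℝ) ≤ C * r * (d + 1) / ε ∧
          SimSpreadIn V
            (fun g : ↥((fun v => v + w) '' (V : Set (Fin n → F))) =>
              ((fun a => a - x ↑g) '' A ↑g) ∩ (V : Set (Fin n → F))) r (1 + ε) ∧
          (2 : ℝ) ^ (-d) * (Nat.card (V : Set (Fin n → F)) : ℝ) ^ 3 ≤
            ∑ g : ↥((fun v => v + w) '' (V : Set (Fin n → F))),
              (Nat.card ↥(((fun a => a - x ↑g) '' A ↑g) ∩ (V : Set (Fin n → F))) : ℝ) ^ 2 := by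
  refine ⟨2, two_pos, ?_⟩
  intro F _ _ n _ ε hε₀ hε₁ r _ d hd A hA
  obtain ⟨K, hK, hKle⟩ := exists_two_rpow_lt_one_add_pow hε₀ hε₁.le hd
  have hδ : (0 : ℝ) < 2 ^ (-d) := by positivity
  have hbound : 1 < (2 : ℝ) ^ (-d) * (1 + ε) ^ (0 + K) := by
    rwa [zero_add, Real.rpow_neg zero_le_two, one_lt_inv_mul₀ (by positivity)]
  have hdens : (2 : ℝ) ^ (-d) * (1 + ε) ^ 0 ≤ density A ⊤ (fun _ => 0) 0 := by
    rwa [pow_zero, mul_one, density_top, le_div_iff₀ (by positivity)]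
  obtain ⟨V, x, w, hcodim, hspread, hdensV⟩ := exists_simSpreadIn_of_le_density A r hε₀.le
    hδ.le K 0 ⊤ (fun _ => 0) 0 hbound hdens (by simp)
  refine ⟨V, x, w, ?_, hspread, (le_div_iff₀ (pow_pos (card_coe_submodule_pos V) 3)).1 hdensV⟩
  have hcodim' : (n : ℝ) ≤ Module.finrank F V + r * K := by exact_mod_cast hcodim.trans_eq (by ring)
  calc (n : ℝ) - Module.finrank F V ≤ r * K := by linarith
    _ ≤ r * (2 * (d + 1) / ε) := by gcongr
    _ = 2 * r * (d + 1) / ε := by ring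

end SkewPaper
end
end

section
/- There exists a constant C > 0 such that the following holds. Let G be a finite abelian group, ε > 0, d ≥ 0, f : G → ℝ_{≥0} with E[f] > 0, {A_g}_{g∈G} a collection of subsets of G with Σ_{g∈G} |A_g| ≥ 2^{−d} |G|², and D : G → ℝ_{≥0} given by D(x) = |A_x|. Then either (1) |⟨μ_f, μ_D⟩ − 1| ≤ ε, or (2) there exists an integer p with 1 ≤ p ≤ C(d+1) such that ‖μ_f − 1‖_p ≥ ε/2. -/
/-! Since `D x ≤ |G|` while `E[D] ≥ 2^{-d} |G|`, the weight `μ_D` is bounded by `2^d` pointwise.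
As `E[μ_D] = 1`, we have `⟨μ_f, μ_D⟩ - 1 = ⟨μ_f - 1, μ_D⟩`, and Hölder's inequality for the
probability weight `μ_D` bounds this by `(E[μ_D |μ_f - 1|^p])^{1/p} ≤ 2^{d/p} ‖μ_f - 1‖_p`.
For `p = ⌈d⌉ + 1 ≤ 2(d + 1)` the factor `2^{d/p}` is at most `2`, so either `‖μ_f - 1‖_p ≥ ε/2`
or the inner product is within `ε` of `1`. -/

open scoped BigOperators Classical

noncomputable section

namespace SkewPaper

variable {G : Type*}

section Expect

variable {G : Type*} [Fintype G]

lemma expect_eq_expect_univ (f : G → ℝ) : expect f = 𝔼 x, f x := by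
  rw [Finset.expect_eq_sum_div_card, Finset.card_univ]
  rfl

lemma expect_nonneg {f : G → ℝ} (hf : ∀ x, 0 ≤ f x) : 0 ≤ expect f := by
  rw [expect_eq_expect_univ]
  exact Finset.expect_nonneg fun x _ => hf x

lemma expect_muFun {f : G → ℝ} (hf : expect f ≠ 0) : expect (muFun f) = 1 := by
  simp only [muFun, expect_eq_expect_univ, ← Finset.expect_div] at hf ⊢
  exact div_self hf

lemma mul_card_le_expect {D : G → ℝ} {c : ℝ}
    (hsum : c * (Fintype.card G : ℝ) ^ 2 ≤ ∑ x, D x) : c * Fintype.card G ≤ expect D := by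
  rcases isEmpty_or_nonempty G with _ | _
  · simp [expect]
  have hcard : (0 : ℝ) < Fintype.card G := by exact_mod_cast Fintype.card_pos
  rw [expect, le_div_iff₀ hcard]
  linarith

lemma muFun_le_inv {D : G → ℝ} {c : ℝ} (hc : 0 < c) (hD : ∀ x, D x ≤ Fintype.card G)
    (hsum : c * (Fintype.card G : ℝ) ^ 2 ≤ ∑ x, D x) (x : G) : muFun D x ≤ c⁻¹ := by
  have hcard : (0 : ℝ) < Fintype.card G := by exact_mod_cast Fintype.card_pos_iff.2 ⟨x⟩
  have hE := mul_card_le_expect hsum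
  rw [muFun, div_le_iff₀ (lt_of_lt_of_le (by positivity) hE)]
  calc D x ≤ Fintype.card G := hD x
    _ = c⁻¹ * (c * Fintype.card G) := by field_simp
    _ ≤ c⁻¹ * expect D := by gcongr

end Expect

section Holder

variable {G : Type*} [Fintype G] {ν : G → ℝ}

lemma inprod_sub_one (hν : expect ν = 1) (u : G → ℝ) :
    inprod u ν - 1 = inprod (fun x => u x - 1) ν := by
  simp only [inprod, expect_eq_expect_univ, sub_one_mul, Finset.expect_sub_distrib] at hν ⊢
  rw [hν]

lemma abs_inprod_le_wnorm (hν0 : ∀ x, 0 ≤ ν x) (hν : expect ν = 1) {p : ℕ} (hp : 1 ≤ p)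
    (g : G → ℝ) : |inprod g ν| ≤ wnorm p ν g := by
  have holder := Real.compact_inner_le_weight_mul_Lp_of_nonneg Finset.univ
    (p := p) (by exact_mod_cast hp) hν0 fun x => abs_nonneg (g x)
  simp only [← expect_eq_expect_univ, hν, Real.one_rpow, one_mul, Real.rpow_natCast] at holder
  calc |inprod g ν| ≤ expect fun x => ν x * |g x| := by
        simp only [inprod, expect_eq_expect_univ]
        refine (Finset.abs_expect_le _ _).trans (Finset.expect_le_expect fun x _ => ?_)
        rw [abs_mul, abs_of_nonneg (hν0 x), mul_comm]
    _ ≤ wnorm p ν g := holder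

lemma wnorm_le_mul_pnorm {M : ℝ} (hM : 0 ≤ M) (hν0 : ∀ x, 0 ≤ ν x) (hνM : ∀ x, ν x ≤ M)
    (p : ℕ) (g : G → ℝ) : wnorm p ν g ≤ M ^ (p : ℝ)⁻¹ * pnorm p g := by
  rw [pnorm, wnorm, wnorm, ← Real.mul_rpow hM (expect_nonneg fun x => by positivity)]
  refine Real.rpow_le_rpow (expect_nonneg fun x => mul_nonneg (hν0 x) (by positivity)) ?_
    (by positivity)
  simp only [expect_eq_expect_univ, one_mul, Finset.mul_expect]
  exact Finset.expect_le_expect fun x _ => by gcongr; exact hνM x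

lemma abs_inprod_sub_one_le {M : ℝ} (hM : 0 ≤ M) (hν0 : ∀ x, 0 ≤ ν x) (hν : expect ν = 1)
    (hνM : ∀ x, ν x ≤ M) {p : ℕ} (hp : 1 ≤ p) (u : G → ℝ) :
    |inprod u ν - 1| ≤ M ^ (p : ℝ)⁻¹ * pnorm p (fun x => u x - 1) := by
  rw [inprod_sub_one hν]
  exact (abs_inprod_le_wnorm hν0 hν hp _).trans (wnorm_le_mul_pnorm hM hν0 hνM p _)

lemma pnorm_nonneg (p : ℕ) (g : G → ℝ) : 0 ≤ pnorm p g :=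
  Real.rpow_nonneg (expect_nonneg fun x => by positivity) _

end Holder

lemma two_rpow_rpow_inv_le_two {d p : ℝ} (hp : 0 < p) (hdp : d ≤ p) :
    ((2 : ℝ) ^ d) ^ p⁻¹ ≤ 2 := by
  rw [← Real.rpow_mul zero_le_two]
  calc (2 : ℝ) ^ (d * p⁻¹) ≤ 2 ^ (1 : ℝ) :=
        Real.rpow_le_rpow_of_exponent_le one_le_two (by rwa [← div_eq_mul_inv, div_le_one hp])
    _ = 2 := Real.rpow_one 2

theorem statement10 :
    ∃ C : ℝ, 0 < C ∧ ∀ (G : Type) [AddCommGroup G] [Fintype G],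
      ∀ ε : ℝ, 0 < ε → ∀ d : ℝ, 0 ≤ d →
      ∀ f : G → ℝ, (∀ x, 0 ≤ f x) → 0 < expect f →
      ∀ A : G → Set G,
        (2 : ℝ) ^ (-d) * (Fintype.card G : ℝ) ^ 2 ≤ ∑ g, (Nat.card (A g) : ℝ) →
      ∀ D : G → ℝ, D = (fun x => (Nat.card (A x) : ℝ)) →
        |inprod (muFun f) (muFun D) - 1| ≤ ε ∨
        ∃ p : ℕ, 1 ≤ p ∧ (p : ℝ) ≤ C * (d + 1) ∧ ε / 2 ≤ pnorm p (fun x => muFun f x - 1) := by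
  refine ⟨2, two_pos, fun G _ _ ε _ d hd f _ _ A hA D hD => ?_⟩
  subst hD
  set p : ℕ := ⌈d⌉₊ + 1
  have hdp : d ≤ p := by push_cast [p]; linarith [Nat.le_ceil d]
  have hp2 : (p : ℝ) ≤ 2 * (d + 1) := by push_cast [p]; linarith [Nat.ceil_lt_add_one hd]
  by_cases hbig : ε / 2 ≤ pnorm p (fun x => muFun f x - 1)
  · exact Or.inr ⟨p, le_add_self, hp2, hbig⟩
  left
  have hcol : ∀ x, (Nat.card (A x) : ℝ) ≤ Fintype.card G := fun x => by
    exact_mod_cast Nat.card_le_card_of_injective _ Subtype.val_injective |>.trans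
      (Nat.card_eq_fintype_card).le
  have hpos : 0 < expect fun x => (Nat.card (A x) : ℝ) :=
    lt_of_lt_of_le (by positivity) (mul_card_le_expect hA)
  have hμle : ∀ x, muFun (fun x => (Nat.card (A x) : ℝ)) x ≤ 2 ^ d := fun x => by
    simpa [Real.rpow_neg] using muFun_le_inv (by positivity) hcol hA x
  calc _ ≤ ((2 : ℝ) ^ d) ^ (p : ℝ)⁻¹ * pnorm p (fun x => muFun f x - 1) :=
        abs_inprod_sub_one_le (by positivity) (fun x => div_nonneg (by positivity) hpos.le)
          (expect_muFun hpos.ne') hμle le_add_self _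
    _ ≤ 2 * pnorm p (fun x => muFun f x - 1) := by
        gcongr
        · exact pnorm_nonneg p _
        · exact two_rpow_rpow_inv_le_two (by positivity) hdp
    _ ≤ ε := by linarith

end SkewPaper
end
end

section
/- Let G be a finite abelian group, p ≥ 2 an even integer, S ⊆ G, and {f_g}_{g∈S} a collection of real-valued functions on G. Then ‖Σ_{g∈S} f_g ∘ f_g‖_p ≥ ‖Σ_{g∈S} f_g ∘ f_g^g‖_p, where f^g denotes the translated function f^g(x) = f(x − g). -/
open scoped BigOperators Classical

noncomputable section

namespace SkewPaper

variable {G : Type*}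

section Aux

variable {H : Type*} [AddCommGroup H] [Fintype H] {p : ℕ}

/-- `Φ h u = ∑ x, ∏ i, h i (u i + x)`: the sum of the product function over the diagonal coset. -/
private def Phi (h : Fin p → H → ℝ) (u : Fin p → H) : ℝ := ∑ x : H, ∏ i, h i (u i + x)

private lemma Phi_shift (h : Fin p → H → ℝ) (u : Fin p → H) (x : H) :
    Phi h (fun i => u i + x) = Phi h u := by
  unfold Phi
  refine Fintype.sum_equiv (Equiv.addLeft x) _ _ fun y => ?_
  refine Finset.prod_congr rfl fun i _ => ?_
  simp [add_assoc]

private lemma sum_mul_Phi (h : Fin p → H → ℝ) (c : Fin p → H) :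
    (Fintype.card H : ℝ) * ∑ u : Fin p → H, (∏ i, h i (u i + c i)) * Phi h u
      = ∑ u : Fin p → H, Phi h (fun i => u i + c i) * Phi h u := by
  have key : ∀ x : H, ∑ u : Fin p → H, (∏ i, h i ((u i + c i) + x)) * Phi h u
      = ∑ u : Fin p → H, (∏ i, h i (u i + c i)) * Phi h u := by
    intro x
    refine Fintype.sum_equiv (Equiv.addRight (fun _ => x : Fin p → H)) _ _ fun u => ?_
    simp only [Equiv.coe_addRight, Pi.add_apply]
    have h2 : Phi h (u + fun _ => x) = Phi h u := Phi_shift h u x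
    rw [h2]
    exact congrArg (· * Phi h u) (Finset.prod_congr rfl fun i _ => by rw [add_right_comm])
  symm
  calc ∑ u : Fin p → H, Phi h (fun i => u i + c i) * Phi h u
      = ∑ u : Fin p → H, ∑ x : H, (∏ i, h i ((u i + c i) + x)) * Phi h u := by
        refine Finset.sum_congr rfl fun u _ => ?_
        rw [show Phi h (fun i => u i + c i) = ∑ x : H, ∏ i, h i ((u i + c i) + x) from rfl,
          Finset.sum_mul]
    _ = ∑ x : H, ∑ u : Fin p → H, (∏ i, h i ((u i + c i) + x)) * Phi h u := Finset.sum_comm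
    _ = ∑ _x : H, ∑ u : Fin p → H, (∏ i, h i (u i + c i)) * Phi h u :=
        Finset.sum_congr rfl fun x _ => key x
    _ = (Fintype.card H : ℝ) * ∑ u : Fin p → H, (∏ i, h i (u i + c i)) * Phi h u := by
        rw [Finset.sum_const, Finset.card_univ, nsmul_eq_mul]

private lemma core_le (h : Fin p → H → ℝ) (c : Fin p → H) :
    ∑ u : Fin p → H, (∏ i, h i (u i + c i)) * Phi h u
      ≤ ∑ u : Fin p → H, (∏ i, h i (u i)) * Phi h u := by
  have hN : (0 : ℝ) < Fintype.card H := by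
    have : Nonempty H := ⟨0⟩
    exact_mod_cast Fintype.card_pos
  rw [← mul_le_mul_iff_right₀ hN, sum_mul_Phi]
  have h0 := sum_mul_Phi h (fun _ => (0 : H))
  simp only [add_zero] at h0
  rw [h0]
  have reidx : ∑ u : Fin p → H, Phi h (fun i => u i + c i) ^ 2
      = ∑ u : Fin p → H, Phi h u ^ 2 := by
    refine Fintype.sum_equiv (Equiv.addRight c) _ _ fun u => rfl
  have cs := Finset.sum_mul_sq_le_sq_mul_sq Finset.univ
    (fun u : Fin p → H => Phi h (fun i => u i + c i)) (fun u => Phi h u)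
  rw [reidx] at cs
  have hb : (0 : ℝ) ≤ ∑ u : Fin p → H, Phi h u ^ 2 :=
    Finset.sum_nonneg fun _ _ => sq_nonneg _
  have heq : ∑ u : Fin p → H, Phi h u * Phi h u = ∑ u : Fin p → H, Phi h u ^ 2 := by
    refine Finset.sum_congr rfl fun u _ => (sq (Phi h u)).symm
  rw [heq]
  nlinarith [cs, hb]

private lemma bridge (h : Fin p → H → ℝ) (c : Fin p → H) :
    ∑ x : H, ∏ i, (∑ y : H, h i y * h i ((x - c i) + y))
      = ∑ u : Fin p → H, (∏ i, h i (u i + c i)) * Phi h u := by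
  have step1 : ∀ x : H, (∏ i, ∑ y : H, h i y * h i ((x - c i) + y))
      = ∑ u : Fin p → H, (∏ i, h i (u i)) * ∏ i, h i ((x - c i) + u i) := by
    intro x
    rw [Finset.prod_univ_sum, Fintype.piFinset_univ]
    exact Finset.sum_congr rfl fun u _ => Finset.prod_mul_distrib
  calc ∑ x : H, ∏ i, (∑ y : H, h i y * h i ((x - c i) + y))
      = ∑ x : H, ∑ u : Fin p → H, (∏ i, h i (u i)) * ∏ i, h i ((x - c i) + u i) :=
        Finset.sum_congr rfl fun x _ => step1 x
    _ = ∑ u : Fin p → H, (∏ i, h i (u i)) * Phi h (fun i => u i - c i) := by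
        rw [Finset.sum_comm]
        refine Finset.sum_congr rfl fun u _ => ?_
        rw [show Phi h (fun i => u i - c i) = ∑ x : H, ∏ i, h i ((u i - c i) + x) from rfl,
          Finset.mul_sum]
        refine Finset.sum_congr rfl fun x _ => ?_
        congr 1
        refine Finset.prod_congr rfl fun i _ => ?_
        congr 1
        abel
    _ = ∑ u : Fin p → H, (∏ i, h i (u i + c i)) * Phi h u := by
        refine (Fintype.sum_equiv (Equiv.subRight c) _ _ fun u => ?_)
        have h1 : (∏ i, h i (u i)) = ∏ i, h i ((u i - c i) + c i) :=
          Finset.prod_congr rfl fun i _ => by rw [sub_add_cancel]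
        rw [h1]
        rfl

private lemma tuple_le (h : Fin p → H → ℝ) (c : Fin p → H) :
    ∑ x : H, ∏ i, dconv (h i) (h i) (x - c i) ≤ ∑ x : H, ∏ i, dconv (h i) (h i) x := by
  have hNp : (0 : ℝ) < (Fintype.card H : ℝ) ^ p := by
    have : Nonempty H := ⟨0⟩
    have : (0 : ℝ) < Fintype.card H := by exact_mod_cast Fintype.card_pos
    positivity
  have rew : ∀ c : Fin p → H, ∑ x : H, ∏ i, dconv (h i) (h i) (x - c i)
      = (∑ x : H, ∏ i, (∑ y : H, h i y * h i ((x - c i) + y))) / (Fintype.card H : ℝ) ^ p := by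
    intro c
    rw [Finset.sum_div]
    refine Finset.sum_congr rfl fun x _ => ?_
    rw [eq_div_iff (ne_of_gt hNp)]
    calc (∏ i, dconv (h i) (h i) (x - c i)) * (Fintype.card H : ℝ) ^ p
        = ∏ i, (dconv (h i) (h i) (x - c i) * (Fintype.card H : ℝ)) := by
          rw [Finset.prod_mul_distrib, Finset.prod_const, Finset.card_univ, Fintype.card_fin]
      _ = ∏ i, (∑ y : H, h i y * h i ((x - c i) + y)) := by
          refine Finset.prod_congr rfl fun i _ => ?_
          rw [show dconv (h i) (h i) (x - c i)
              = (∑ y : H, h i y * h i ((x - c i) + y)) / (Fintype.card H : ℝ) from rfl]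
          field_simp
  have rew0 := rew (fun _ => 0)
  simp only [sub_zero] at rew0
  rw [rew c, rew0]
  apply (div_le_div_iff_of_pos_right hNp).mpr
  have b0 := bridge h (fun _ => (0 : H))
  simp only [sub_zero, add_zero] at b0
  rw [bridge h c, b0]
  exact core_le h c

private lemma moment (S : Finset H) (F : H → H → ℝ) (p : ℕ) :
    ∑ x : H, (∑ g ∈ S, dconv (F g) (F g) (x - g)) ^ p
      ≤ ∑ x : H, (∑ g ∈ S, dconv (F g) (F g) x) ^ p := by
  have expand : ∀ a : H → ℝ, (∑ g ∈ S, a g) ^ p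
      = ∑ t ∈ Fintype.piFinset (fun _ : Fin p => S), ∏ i, a (t i) := by
    intro a
    rw [← Finset.prod_univ_sum (fun _ : Fin p => S) (fun _ g => a g), Finset.prod_const,
      Finset.card_univ, Fintype.card_fin]
  calc ∑ x : H, (∑ g ∈ S, dconv (F g) (F g) (x - g)) ^ p
      = ∑ t ∈ Fintype.piFinset (fun _ : Fin p => S), ∑ x : H,
          ∏ i, dconv (F (t i)) (F (t i)) (x - t i) := by
        rw [Finset.sum_comm]
        exact Finset.sum_congr rfl fun x _ => expand (fun g => dconv (F g) (F g) (x - g))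
    _ ≤ ∑ t ∈ Fintype.piFinset (fun _ : Fin p => S), ∑ x : H,
          ∏ i, dconv (F (t i)) (F (t i)) x :=
        Finset.sum_le_sum fun t _ => tuple_le (fun i => F (t i)) t
    _ = ∑ x : H, (∑ g ∈ S, dconv (F g) (F g) x) ^ p := by
        rw [Finset.sum_comm]
        exact Finset.sum_congr rfl fun x _ => (expand (fun g => dconv (F g) (F g) x)).symm

end Aux

theorem statement11 {G : Type*} [AddCommGroup G] [Fintype G] (p : ℕ) (hp2 : 2 ≤ p)
    (hpe : Even p) (S : Finset G) (f : G → G → ℝ) :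
    pnorm p (fun x => ∑ g ∈ S, dconv (f g) (fun z => f g (z - g)) x) ≤
      pnorm p (fun x => ∑ g ∈ S, dconv (f g) (f g) x) := by
  have hshift : ∀ (g x : G), dconv (f g) (fun z => f g (z - g)) x = dconv (f g) (f g) (x - g) := by
    intro g x
    show expect (fun y => f g y * f g ((x + y) - g)) = expect (fun y => f g y * f g ((x - g) + y))
    congr 1
    funext y
    rw [sub_add_eq_add_sub]
  have hN : (0 : ℝ) < Fintype.card G := by
    have : Nonempty G := ⟨0⟩
    exact_mod_cast Fintype.card_pos
  unfold pnorm wnorm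
  apply Real.rpow_le_rpow
  · apply div_nonneg _ hN.le
    exact Finset.sum_nonneg fun x _ => by positivity
  · show expect _ ≤ expect _
    unfold expect
    apply (div_le_div_iff_of_pos_right hN).mpr
    have key := moment S f p
    calc ∑ x : G, 1 * |∑ g ∈ S, dconv (f g) (fun z => f g (z - g)) x| ^ p
        = ∑ x : G, (∑ g ∈ S, dconv (f g) (f g) (x - g)) ^ p := by
          refine Finset.sum_congr rfl fun x _ => ?_
          rw [one_mul, hpe.pow_abs]
          congr 1
          exact Finset.sum_congr rfl fun g _ => hshift g x
      _ ≤ ∑ x : G, (∑ g ∈ S, dconv (f g) (f g) x) ^ p := key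
      _ = ∑ x : G, 1 * |∑ g ∈ S, dconv (f g) (f g) x| ^ p := by
          refine Finset.sum_congr rfl fun x _ => ?_
          rw [one_mul, hpe.pow_abs]
  · positivity

end SkewPaper
end
end
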